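/- arXiv:1504.06943 — 3 statements merged into one kernel-verified Lean document; each statement's English description precedes it below -/
import Mathlib

section
/- Upper bound for state conversion with state-generating oracles: let D be a finite set, n ∈ ℕ, X a finite-dimensional complex inner product space with a distinguished unit vector e₀, and Z a finite-dimensional complex inner product space. For each x ∈ D and j ∈ {1,…,n}, let O_{x,j} be a unitary on X, set ψ_{x,j} = O_{x,j} e₀, and let O_x = ⊕_{j=1}^n O_{x,j} be the block-diagonal unitary on ℂ^n ⊗ X. Let ρ_x, σ_x be unit vectors in Z. Then γ₂((⟨ρ_x,ρ_y⟩ − ⟨σ_x,σ_y⟩)_{x,y∈D} | (O_x − O_y)_{x,y∈D}) ≤ γ₂((⟨ρ_x,ρ_y⟩ − ⟨σ_x,σ_y⟩)_{x,y∈D} | (D_{xy})_{x,y∈D}), where D_{xy} is the n × n diagonal matrix (a linear map ℂ^n → ℂ^n) with j-th diagonal entry 1 − ⟨ψ_{x,j}, ψ_{y,j}⟩. -/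
noncomputable section

open scoped ENNReal ComplexOrder

/-- A linear endomorphism of a finite-dimensional complex inner product space is unitary. -/
def IsUnitaryMap {E : Type*} [NormedAddCommGroup E] [InnerProductSpace ℂ E]
    [FiniteDimensional ℂ E] (f : E →ₗ[ℂ] E) : Prop :=
  LinearMap.adjoint f ∘ₗ f = LinearMap.id ∧ f ∘ₗ LinearMap.adjoint f = LinearMap.id

/-- Operator norm of a linear map between finite-dimensional inner product spaces. -/
noncomputable def opNorm {E F : Type*} [NormedAddCommGroup E] [InnerProductSpace ℂ E]
    [NormedAddCommGroup F] [InnerProductSpace ℂ F] [FiniteDimensional ℂ E]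
    (f : E →ₗ[ℂ] F) : ℝ :=
  ‖LinearMap.toContinuousLinearMap f‖

/-- A complex scalar viewed as a linear map `ℂ → ℂ`. -/
noncomputable def scalarMap (c : ℂ) : ℂ →ₗ[ℂ] ℂ := c • LinearMap.id

/-- The block-diagonal map `⊕ᵢ Δᵢ` on an `ℓ²`-direct sum of copies of a space. -/
noncomputable def piBlock {ι : Type*} [Fintype ι] {X₁ X₂ : Type*}
    [NormedAddCommGroup X₁] [InnerProductSpace ℂ X₁]
    [NormedAddCommGroup X₂] [InnerProductSpace ℂ X₂]
    (Δ : ι → (X₂ →ₗ[ℂ] X₁)) :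
    PiLp 2 (fun _ : ι => X₂) →ₗ[ℂ] PiLp 2 (fun _ : ι => X₁) :=
  (WithLp.linearEquiv 2 ℂ (∀ _ : ι, X₁)).symm.toLinearMap ∘ₗ
    (LinearMap.pi fun i => Δ i ∘ₗ LinearMap.proj i) ∘ₗ
      (WithLp.linearEquiv 2 ℂ (∀ _ : ι, X₂)).toLinearMap

/-- The relative `γ₂`-norm `γ₂(A | Δ)` of a family `A = (A_{xy} : Z₂ → Z₁)` relative to a
family `Δ = (Δ_{xy} : X₂ → X₁)`: the infimum over `k ∈ ℕ` and factorizations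
`A_{xy} = Υ_x* ∘ (Δ_{xy} ⊗ id_{ℂᵏ}) ∘ Φ_y` of `max (max_x ‖Υ_x‖²) (max_y ‖Φ_y‖²)`,
where `X ⊗ ℂᵏ` is realized as the `ℓ²`-direct sum of `k` copies of `X`.
The infimum of the empty set is `+∞`. -/
noncomputable def relGamma2 {D₁ D₂ : Type*} [Fintype D₁] [Fintype D₂]
    {X₁ X₂ Z₁ Z₂ : Type*}
    [NormedAddCommGroup X₁] [InnerProductSpace ℂ X₁] [FiniteDimensional ℂ X₁]
    [NormedAddCommGroup X₂] [InnerProductSpace ℂ X₂] [FiniteDimensional ℂ X₂]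
    [NormedAddCommGroup Z₁] [InnerProductSpace ℂ Z₁] [FiniteDimensional ℂ Z₁]
    [NormedAddCommGroup Z₂] [InnerProductSpace ℂ Z₂] [FiniteDimensional ℂ Z₂]
    (A : D₁ → D₂ → (Z₂ →ₗ[ℂ] Z₁)) (Δ : D₁ → D₂ → (X₂ →ₗ[ℂ] X₁)) : ℝ≥0∞ :=
  ⨅ (k : ℕ) (Υ : D₁ → (Z₁ →ₗ[ℂ] PiLp 2 (fun _ : Fin k => X₁)))
    (Φ : D₂ → (Z₂ →ₗ[ℂ] PiLp 2 (fun _ : Fin k => X₂)))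
    (_ : ∀ x y, A x y =
      LinearMap.adjoint (Υ x) ∘ₗ piBlock (fun _ : Fin k => Δ x y) ∘ₗ Φ y),
    (⨆ x, ENNReal.ofReal (opNorm (Υ x) ^ 2)) ⊔ (⨆ y, ENNReal.ofReal (opNorm (Φ y) ^ 2))

/-!
Conjugating the oracle difference `O_x - O_y` by the block isometries
`E_x = ⊕_j |ψ_{x,j}⟩` on the left and `E₀ = ⊕_j |e₀⟩` on the right gives
`E_x* (O_x - O_y) E₀ = ⊕_j (⟨ψ_{x,j}, ψ_{x,j}⟩ - ⟨ψ_{x,j}, ψ_{y,j}⟩) = ⊕_j (1 - ⟨ψ_{x,j}, ψ_{y,j}⟩)`.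
Hence any factorization relative to these diagonal matrices becomes one relative to `O_x - O_y`
after composing `Υ_x` with `E_x ⊗ id` and `Φ_y` with `E₀ ⊗ id`, which leaves operator norms
unchanged.
-/

section PiBlock

variable {ι : Type*} [Fintype ι] {X₀ X₁ X₂ : Type*}
    [NormedAddCommGroup X₀] [InnerProductSpace ℂ X₀]
    [NormedAddCommGroup X₁] [InnerProductSpace ℂ X₁]
    [NormedAddCommGroup X₂] [InnerProductSpace ℂ X₂]

theorem piBlock_apply (Δ : ι → (X₂ →ₗ[ℂ] X₁)) (z : PiLp 2 (fun _ : ι => X₂)) (i : ι) :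
    piBlock Δ z i = Δ i (z i) := rfl

theorem piBlock_comp (f : ι → (X₁ →ₗ[ℂ] X₀)) (g : ι → (X₂ →ₗ[ℂ] X₁)) :
    piBlock f ∘ₗ piBlock g = piBlock (fun i => f i ∘ₗ g i) := rfl

theorem piBlock_sub (f g : ι → (X₂ →ₗ[ℂ] X₁)) :
    piBlock f - piBlock g = piBlock (fun i => f i - g i) := rfl

theorem adjoint_piBlock [FiniteDimensional ℂ X₁] [FiniteDimensional ℂ X₂]
    (Δ : ι → (X₂ →ₗ[ℂ] X₁)) :
    LinearMap.adjoint (piBlock Δ) = piBlock (fun i => LinearMap.adjoint (Δ i)) := by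
  symm
  rw [LinearMap.eq_adjoint_iff]
  intro z w
  simp [PiLp.inner_apply, piBlock_apply, LinearMap.adjoint_inner_left]

def piBlockIsometry (g : ι → (X₂ →ₗᵢ[ℂ] X₁)) :
    PiLp 2 (fun _ : ι => X₂) →ₗᵢ[ℂ] PiLp 2 (fun _ : ι => X₁) where
  toLinearMap := piBlock fun i => (g i).toLinearMap
  norm_map' z := by
    simp only [PiLp.norm_eq_of_L2]
    exact congrArg Real.sqrt (Finset.sum_congr rfl fun i _ => by simp [piBlock_apply])

theorem piBlockIsometry_toLinearMap (g : ι → (X₂ →ₗᵢ[ℂ] X₁)) :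
    (piBlockIsometry g).toLinearMap = piBlock fun i => (g i).toLinearMap := rfl

end PiBlock

theorem opNorm_linearIsometry_comp {E F G : Type*}
    [NormedAddCommGroup E] [InnerProductSpace ℂ E] [NormedAddCommGroup F] [InnerProductSpace ℂ F]
    [NormedAddCommGroup G] [InnerProductSpace ℂ G] [FiniteDimensional ℂ E]
    (T : F →ₗᵢ[ℂ] G) (f : E →ₗ[ℂ] F) :
    opNorm (T.toLinearMap ∘ₗ f) = opNorm f :=
  ContinuousLinearMap.opNorm_ext _ _ fun _ => by simp

theorem IsUnitaryMap.inner_map_map {E : Type*} [NormedAddCommGroup E] [InnerProductSpace ℂ E]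
    [FiniteDimensional ℂ E] {f : E →ₗ[ℂ] E} (hf : IsUnitaryMap f) (v w : E) :
    inner ℂ (f v) (f w) = inner ℂ v w := by
  rw [← LinearMap.adjoint_inner_right, ← LinearMap.comp_apply, hf.1, LinearMap.id_apply]

theorem IsUnitaryMap.norm_map {E : Type*} [NormedAddCommGroup E] [InnerProductSpace ℂ E]
    [FiniteDimensional ℂ E] {f : E →ₗ[ℂ] E} (hf : IsUnitaryMap f) (v : E) : ‖f v‖ = ‖v‖ :=
  (LinearMap.norm_map_iff_inner_map_map f).2 hf.inner_map_map v

theorem adjoint_toSpanSingleton_comp_comp_toSpanSingleton {E F : Type*}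
    [NormedAddCommGroup E] [InnerProductSpace ℂ E] [FiniteDimensional ℂ E]
    [NormedAddCommGroup F] [InnerProductSpace ℂ F] [FiniteDimensional ℂ F]
    (v : F) (f : E →ₗ[ℂ] F) (w : E) :
    LinearMap.adjoint (LinearMap.toSpanSingleton ℂ F v) ∘ₗ f ∘ₗ LinearMap.toSpanSingleton ℂ E w =
      scalarMap (inner ℂ v (f w)) := by
  ext
  simp [LinearMap.adjoint_toSpanSingleton, scalarMap]

theorem relGamma2_le_of_eq_adjoint_comp_comp {D₁ D₂ : Type*} [Fintype D₁] [Fintype D₂]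
    {X₁ X₂ Y₁ Y₂ Z₁ Z₂ : Type*}
    [NormedAddCommGroup X₁] [InnerProductSpace ℂ X₁] [FiniteDimensional ℂ X₁]
    [NormedAddCommGroup X₂] [InnerProductSpace ℂ X₂] [FiniteDimensional ℂ X₂]
    [NormedAddCommGroup Y₁] [InnerProductSpace ℂ Y₁] [FiniteDimensional ℂ Y₁]
    [NormedAddCommGroup Y₂] [InnerProductSpace ℂ Y₂] [FiniteDimensional ℂ Y₂]
    [NormedAddCommGroup Z₁] [InnerProductSpace ℂ Z₁] [FiniteDimensional ℂ Z₁]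
    [NormedAddCommGroup Z₂] [InnerProductSpace ℂ Z₂] [FiniteDimensional ℂ Z₂]
    (A : D₁ → D₂ → (Z₂ →ₗ[ℂ] Z₁)) (Δ : D₁ → D₂ → (X₂ →ₗ[ℂ] X₁))
    (Δ' : D₁ → D₂ → (Y₂ →ₗ[ℂ] Y₁)) (L : D₁ → (Y₁ →ₗᵢ[ℂ] X₁)) (R : D₂ → (Y₂ →ₗᵢ[ℂ] X₂))
    (hΔ' : ∀ x y, Δ' x y = LinearMap.adjoint (L x).toLinearMap ∘ₗ Δ x y ∘ₗ (R y).toLinearMap) :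
    relGamma2 A Δ ≤ relGamma2 A Δ' := by
  refine le_iInf fun k => le_iInf fun Υ => le_iInf fun Φ => le_iInf fun hA => ?_
  let L' x := piBlockIsometry fun _ : Fin k => L x
  let R' y := piBlockIsometry fun _ : Fin k => R y
  refine iInf_le_of_le k <| iInf_le_of_le (fun x => (L' x).toLinearMap ∘ₗ Υ x) <|
    iInf_le_of_le (fun y => (R' y).toLinearMap ∘ₗ Φ y) <| iInf_le_of_le (fun x y => ?_) ?_
  · rw [hA, hΔ', LinearMap.adjoint_comp, ← piBlock_comp, ← piBlock_comp, ← adjoint_piBlock]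
    rfl
  · simp only [opNorm_linearIsometry_comp, le_refl]

theorem statement14_general {D : Type} [Fintype D] (n : ℕ) {X Z : Type}
    [NormedAddCommGroup X] [InnerProductSpace ℂ X] [FiniteDimensional ℂ X]
    [NormedAddCommGroup Z] [InnerProductSpace ℂ Z] [FiniteDimensional ℂ Z]
    (e₀ : X) (he₀ : ‖e₀‖ = 1)
    (O : D → Fin n → (X →ₗ[ℂ] X)) (hO : ∀ x j, IsUnitaryMap (O x j))
    (ρ σ : D → Z) :
    relGamma2
        (fun x y => scalarMap ((inner ℂ (ρ x) (ρ y) : ℂ) - (inner ℂ (σ x) (σ y) : ℂ)))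
        (fun x y => piBlock (O x) - piBlock (O y)) ≤
      relGamma2
        (fun x y => scalarMap ((inner ℂ (ρ x) (ρ y) : ℂ) - (inner ℂ (σ x) (σ y) : ℂ)))
        (fun x y =>
          piBlock (fun j => scalarMap (1 - (inner ℂ (O x j e₀) (O y j e₀) : ℂ)))) := by
  have hψ (x j) : ‖O x j e₀‖ = 1 := ((hO x j).norm_map e₀).trans he₀
  have hψψ (x j) : (inner ℂ (O x j e₀) (O x j e₀) : ℂ) = 1 := by
    rw [(hO x j).inner_map_map, inner_self_eq_norm_sq_to_K, he₀]
    norm_num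
  refine relGamma2_le_of_eq_adjoint_comp_comp _ _ _
    (fun x => piBlockIsometry fun j => LinearIsometry.toSpanSingleton ℂ X (hψ x j))
    (fun _ => piBlockIsometry fun _ => LinearIsometry.toSpanSingleton ℂ X he₀) fun x y => ?_
  rw [piBlockIsometry_toLinearMap, piBlockIsometry_toLinearMap, adjoint_piBlock, piBlock_sub,
    piBlock_comp, piBlock_comp]
  congr 1
  funext j
  rw [LinearIsometry.coe_toSpanSingleton, LinearIsometry.coe_toSpanSingleton,
    adjoint_toSpanSingleton_comp_comp_toSpanSingleton, LinearMap.sub_apply, inner_sub_right, hψψ]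

/-- Upper bound for state conversion with state-generating oracles:
for block-diagonal oracles `O_x = ⊕_j O_{x,j}` on `ℂⁿ ⊗ X` generating the states
`ψ_{x,j} = O_{x,j} e₀`, we have
`γ₂(⟨ρ_x,ρ_y⟩ − ⟨σ_x,σ_y⟩ | O_x − O_y) ≤
 γ₂(⟨ρ_x,ρ_y⟩ − ⟨σ_x,σ_y⟩ | ⊕_j (1 − ⟨ψ_{x,j}, ψ_{y,j}⟩))`,
the latter relative to the `n × n` diagonal matrices with entries
`1 − ⟨ψ_{x,j}, ψ_{y,j}⟩`. -/
theorem statement14 {D : Type} [Fintype D] (n : ℕ) {X Z : Type}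
    [NormedAddCommGroup X] [InnerProductSpace ℂ X] [FiniteDimensional ℂ X]
    [NormedAddCommGroup Z] [InnerProductSpace ℂ Z] [FiniteDimensional ℂ Z]
    (e₀ : X) (he₀ : ‖e₀‖ = 1)
    (O : D → Fin n → (X →ₗ[ℂ] X)) (hO : ∀ x j, IsUnitaryMap (O x j))
    (ρ σ : D → Z) (hρ : ∀ x, ‖ρ x‖ = 1) (hσ : ∀ x, ‖σ x‖ = 1) :
    relGamma2
        (fun x y => scalarMap ((inner ℂ (ρ x) (ρ y) : ℂ) - (inner ℂ (σ x) (σ y) : ℂ)))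
        (fun x y => piBlock (O x) - piBlock (O y)) ≤
      relGamma2
        (fun x y => scalarMap ((inner ℂ (ρ x) (ρ y) : ℂ) - (inner ℂ (σ x) (σ y) : ℂ)))
        (fun x y =>
          piBlock (fun j => scalarMap (1 - (inner ℂ (O x j e₀) (O y j e₀) : ℂ)))) :=
  statement14_general n e₀ he₀ O hO ρ σ

end
end

section
/- Let I and J be finite sets and X = (X_{ij}) a complex I × J matrix with γ₂(X) < 1, meaning there exist c < 1, k ∈ ℕ, and vectors u_i, v_j ∈ ℂ^k with X_{ij} = ⟨u_i, v_j⟩ for all i, j and (max_i ‖u_i‖)(max_j ‖v_j‖) ≤ c. Then |X_{ij}| < 1 for all i, j, and the I × J matrix Y defined by Y_{ij} = 1/(1 − X_{ij}) satisfies γ₂(Y) ≤ 1/(1 − c); that is, for every ε > 0 there exist k′ ∈ ℕ and vectors u′_i, v′_j ∈ ℂ^{k′} with Y_{ij} = ⟨u′_i, v′_j⟩ for all i, j and (max_i ‖u′_i‖)(max_j ‖v′_j‖) ≤ 1/(1 − c) + ε. -/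
/-!
After rescaling `u` against `v`, `X i j = ⟪u i, v j⟫` with `‖u i‖², ‖v j‖² ≤ c`. Entrywise
`1 / (1 - X) = ∑_{n<N} X ^ n + X ^ N / (1 - X)`. The entrywise power `X ^ n` factors through a
tensor power with squared bounds `c ^ n`, and sums factor through orthogonal direct sums, so the
head has squared bounds `∑ c ^ n ≤ 1 / (1 - c)`. The tail has entries at most `c ^ N / (1 - c)`, so
pairing its rows with the standard basis of `ℂ^J` factors it with bounds that drop below `ε` for
large `N`.
-/

open Finset Filter Topology
open scoped InnerProductSpace TensorProduct

section

variable {I J : Type}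

/-- The bounds `a` and `b` are on squared norms, so that they add under sums and multiply under
entrywise products. -/
def HasL2Factorization (M : I → J → ℂ) (a b : ℝ) : Prop :=
  ∃ (E : Type) (_ : NormedAddCommGroup E) (_ : InnerProductSpace ℂ E) (_ : FiniteDimensional ℂ E)
    (u : I → E) (v : J → E),
    (∀ i j, M i j = ⟪u i, v j⟫_ℂ) ∧ (∀ i, ‖u i‖ ^ 2 ≤ a) ∧ ∀ j, ‖v j‖ ^ 2 ≤ b

theorem HasL2Factorization.of_inner {M : I → J → ℂ} {a b : ℝ} {E : Type} [NormedAddCommGroup E]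
    [InnerProductSpace ℂ E] [FiniteDimensional ℂ E] (u : I → E) (v : J → E)
    (hM : ∀ i j, M i j = ⟪u i, v j⟫_ℂ) (hu : ∀ i, ‖u i‖ ^ 2 ≤ a)
    (hv : ∀ j, ‖v j‖ ^ 2 ≤ b) : HasL2Factorization M a b :=
  ⟨E, inferInstance, inferInstance, inferInstance, u, v, hM, hu, hv⟩

theorem hasL2Factorization_zero : HasL2Factorization (0 : I → J → ℂ) 0 0 :=
  .of_inner (E := ℂ) 0 0 (fun _ _ => by simp) (fun _ => by simp) fun _ => by simp

namespace HasL2Factorization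

variable {M M' : I → J → ℂ} {a a' b b' : ℝ}

theorem mono (h : HasL2Factorization M a b) (ha : a ≤ a') (hb : b ≤ b') :
    HasL2Factorization M a' b' := by
  obtain ⟨E, _, _, _, u, v, hM, hu, hv⟩ := h
  exact of_inner u v hM (fun i => (hu i).trans ha) fun j => (hv j).trans hb

theorem norm_sq_le (h : HasL2Factorization M a b) (i : I) (j : J) : ‖M i j‖ ^ 2 ≤ a * b := by
  obtain ⟨E, _, _, _, u, v, hM, hu, hv⟩ := h
  calc ‖M i j‖ ^ 2 ≤ (‖u i‖ * ‖v j‖) ^ 2 := by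
        rw [hM]; gcongr; exact norm_inner_le_norm _ _
    _ = ‖u i‖ ^ 2 * ‖v j‖ ^ 2 := mul_pow _ _ _
    _ ≤ a * b := mul_le_mul (hu i) (hv j) (by positivity) ((sq_nonneg _).trans (hu i))

theorem norm_le {c : ℝ} (h : HasL2Factorization M c c) (hc : 0 ≤ c) (i : I) (j : J) :
    ‖M i j‖ ≤ c :=
  (sq_le_sq₀ (norm_nonneg _) hc).1 <| (h.norm_sq_le i j).trans_eq (sq c).symm

theorem add (h : HasL2Factorization M a b) (h' : HasL2Factorization M' a' b') :
    HasL2Factorization (M + M') (a + a') (b + b') := by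
  obtain ⟨E, _, _, _, u, v, hM, hu, hv⟩ := h
  obtain ⟨E', _, _, _, u', v', hM', hu', hv'⟩ := h'
  refine of_inner (fun i => WithLp.toLp 2 (u i, u' i)) (fun j => WithLp.toLp 2 (v j, v' j))
    (fun i j => ?_) (fun i => ?_) fun j => ?_
  · simp [WithLp.prod_inner_apply, hM, hM']
  · rw [WithLp.prod_norm_sq_eq_of_L2]; exact add_le_add (hu i) (hu' i)
  · rw [WithLp.prod_norm_sq_eq_of_L2]; exact add_le_add (hv j) (hv' j)

theorem mul (h : HasL2Factorization M a b) (h' : HasL2Factorization M' a' b') :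
    HasL2Factorization (M * M') (a * a') (b * b') := by
  obtain ⟨E, _, _, _, u, v, hM, hu, hv⟩ := h
  obtain ⟨E', _, _, _, u', v', hM', hu', hv'⟩ := h'
  refine of_inner (fun i => u i ⊗ₜ[ℂ] u' i) (fun j => v j ⊗ₜ[ℂ] v' j) (fun i j => ?_)
    (fun i => ?_) fun j => ?_
  · simp [TensorProduct.inner_tmul, hM, hM']
  · rw [TensorProduct.norm_tmul, mul_pow]
    exact mul_le_mul (hu i) (hu' i) (by positivity) ((sq_nonneg _).trans (hu i))
  · rw [TensorProduct.norm_tmul, mul_pow]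
    exact mul_le_mul (hv j) (hv' j) (by positivity) ((sq_nonneg _).trans (hv j))

theorem rescale (h : HasL2Factorization M a b) {t : ℝ} (ht : 0 < t) :
    HasL2Factorization M (t * a) (b / t) := by
  obtain ⟨E, _, _, _, u, v, hM, hu, hv⟩ := h
  set r : ℂ := ((√t : ℝ) : ℂ)
  have hr : r ≠ 0 := by simpa [r] using (Real.sqrt_pos.2 ht).ne'
  have hr2 : ‖r‖ ^ 2 = t := by simp [r, Real.sq_sqrt ht.le]
  refine of_inner (fun i => r • u i) (fun j => r⁻¹ • v j) (fun i j => ?_) (fun i => ?_) fun j => ?_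
  · simp [r, hM, hr]
  · rw [norm_smul, mul_pow, hr2]; exact mul_le_mul_of_nonneg_left (hu i) ht.le
  · rw [norm_smul, mul_pow, norm_inv, inv_pow, hr2, inv_mul_eq_div]
    exact div_le_div_of_nonneg_right (hv j) ht.le

theorem balance (h : HasL2Factorization M a b) (ha : 0 ≤ a) (hb : 0 ≤ b) {g : ℝ} (hg : 0 ≤ g)
    (hab : a * b ≤ g ^ 2) : HasL2Factorization M g g := by
  rcases hg.eq_or_lt with rfl | hg
  · have hM : M = 0 := funext₂ fun i j => by
      simpa using (h.norm_sq_le i j).trans (hab.trans_eq (zero_pow two_ne_zero))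
    exact hM ▸ hasL2Factorization_zero
  -- rescaling by `t = (b + g) / (a + g)` turns `a * b ≤ g ^ 2` into both bounds
  have hag : 0 < a + g := by positivity
  have hbg : 0 < b + g := by positivity
  refine (h.rescale (div_pos hbg hag)).mono ?_ ?_
  · rw [div_mul_eq_mul_div, div_le_iff₀ hag]; nlinarith
  · rw [div_div_eq_mul_div, div_le_iff₀ hbg]; nlinarith

theorem pow (h : HasL2Factorization M a b) (n : ℕ) :
    HasL2Factorization (M ^ n) (a ^ n) (b ^ n) := by
  induction n with
  | zero =>
    exact of_inner (E := ℂ) 1 1 (fun _ _ => by simp) (fun _ => by simp) fun _ => by simp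
  | succ n ih => simpa only [pow_succ] using ih.mul h

end HasL2Factorization

theorem hasL2Factorization_sum {ι : Type*} (s : Finset ι) {M : ι → I → J → ℂ} {a b : ι → ℝ}
    (h : ∀ n ∈ s, HasL2Factorization (M n) (a n) (b n)) :
    HasL2Factorization (∑ n ∈ s, M n) (∑ n ∈ s, a n) (∑ n ∈ s, b n) := by
  classical
  induction s using Finset.induction_on with
  | empty => simpa using hasL2Factorization_zero
  | insert n s hn ih =>
    simp only [sum_insert hn]
    exact (h n (mem_insert_self n s)).add (ih fun m hm => h m (mem_insert_of_mem hm))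

theorem hasL2Factorization_of_norm_le [Fintype J] {M : I → J → ℂ} {m : ℝ}
    (hM : ∀ i j, ‖M i j‖ ≤ m) : HasL2Factorization M (Fintype.card J * m ^ 2) 1 := by
  classical
  refine .of_inner (fun i => WithLp.toLp 2 fun j => star (M i j))
    (fun j => EuclideanSpace.single j 1) (fun i j => by simp [EuclideanSpace.inner_single_right])
    (fun i => ?_) fun j => by simp
  rw [EuclideanSpace.norm_sq_eq]
  calc ∑ j, ‖star (M i j)‖ ^ 2 ≤ ∑ _j : J, m ^ 2 := by
        gcongr with j; simpa using (hM i j)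
    _ = Fintype.card J * m ^ 2 := by simp

theorem geom_sum_add_pow_div_one_sub {K : Type*} [Field K] {x : K} (hx : x ≠ 1) (n : ℕ) :
    ∑ i ∈ range n, x ^ i + x ^ n / (1 - x) = 1 / (1 - x) := by
  have hx' : 1 - x ≠ 0 := sub_ne_zero.2 hx.symm
  rw [eq_div_iff hx', add_mul, geom_sum_mul_neg, div_mul_cancel₀ _ hx']
  ring

theorem HasL2Factorization.one_div_one_sub [Fintype J] {M : I → J → ℂ} {c ε : ℝ}
    (h : HasL2Factorization M c c) (hc0 : 0 ≤ c) (hc : c < 1) (hε : 0 < ε) :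
    HasL2Factorization (1 / (1 - M)) (1 / (1 - c) + ε) (1 / (1 - c) + ε) := by
  have hM : ∀ i j, ‖M i j‖ ≤ c := h.norm_le hc0
  obtain ⟨N, hN⟩ : ∃ N : ℕ, Fintype.card J * (c ^ N / (1 - c)) ^ 2 ≤ ε ^ 2 := by
    have hlim : Tendsto (fun N : ℕ => Fintype.card J * (c ^ N / (1 - c)) ^ 2) atTop (𝓝 0) := by
      simpa using
        (((tendsto_pow_atTop_nhds_zero_of_lt_one hc0 hc).div_const (1 - c)).pow 2).const_mul
          (Fintype.card J : ℝ)
    exact (hlim.eventually (ge_mem_nhds (by positivity))).exists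
  have hhead : HasL2Factorization (∑ n ∈ range N, M ^ n) (1 / (1 - c)) (1 / (1 - c)) := by
    have hgeom : ∑ n ∈ range N, c ^ n ≤ 1 / (1 - c) := by
      simpa using geom_sum_Ico_le_of_lt_one (m := 0) (n := N) hc0 hc
    exact (hasL2Factorization_sum _ fun n _ => h.pow n).mono hgeom hgeom
  have htail : HasL2Factorization (M ^ N / (1 - M)) ε ε := by
    refine (hasL2Factorization_of_norm_le (m := c ^ N / (1 - c)) fun i j => ?_).balance
      (by positivity) zero_le_one hε.le (by simpa using hN)
    have hden : 1 - c ≤ ‖1 - M i j‖ := by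
      have := norm_sub_norm_le (1 : ℂ) (M i j)
      rw [norm_one] at this
      linarith [hM i j]
    simp only [Pi.div_apply, Pi.pow_apply, Pi.sub_apply, Pi.one_apply, norm_div, norm_pow]
    gcongr
    exact hM i j
  convert hhead.add htail using 1
  funext i j
  have hM1 : M i j ≠ 1 := fun h1 => by simpa [h1] using (hM i j).trans_lt hc
  simp [Finset.sum_apply, geom_sum_add_pow_div_one_sub hM1]

theorem HasL2Factorization.exists_fin_iSup_mul_iSup_le {M : I → J → ℂ} {a : ℝ}
    (h : HasL2Factorization M a a) (ha : 0 ≤ a) :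
    ∃ (k : ℕ) (u : I → EuclideanSpace ℂ (Fin k)) (v : J → EuclideanSpace ℂ (Fin k)),
      (∀ i j, M i j = ⟪u i, v j⟫_ℂ) ∧ (⨆ i, ‖u i‖) * (⨆ j, ‖v j‖) ≤ a := by
  obtain ⟨E, _, _, _, u, v, hM, hu, hv⟩ := h
  let e := (stdOrthonormalBasis ℂ E).repr
  refine ⟨_, fun i => e (u i), fun j => e (v j), fun i j => by simp [hM], ?_⟩
  have hu' : ⨆ i, ‖e (u i)‖ ≤ √a :=
    Real.iSup_le (fun i => Real.le_sqrt_of_sq_le (by simpa using hu i)) (Real.sqrt_nonneg a)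
  have hv' : ⨆ j, ‖e (v j)‖ ≤ √a :=
    Real.iSup_le (fun j => Real.le_sqrt_of_sq_le (by simpa using hv j)) (Real.sqrt_nonneg a)
  calc (⨆ i, ‖e (u i)‖) * (⨆ j, ‖e (v j)‖) ≤ √a * √a :=
        mul_le_mul hu' hv' (Real.iSup_nonneg fun _ => norm_nonneg _) (Real.sqrt_nonneg a)
    _ = a := Real.mul_self_sqrt ha

end

/-- If a complex matrix `X` indexed by finite sets satisfies
`γ₂(X) < 1`, witnessed by a factorization `X_{ij} = ⟨u_i, v_j⟩` with
`(max_i ‖u_i‖)(max_j ‖v_j‖) ≤ c < 1`, then `|X_{ij}| < 1` for all `i, j`, and the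
matrix `Y` with `Y_{ij} = 1/(1 − X_{ij})` satisfies `γ₂(Y) ≤ 1/(1 − c)`: for every
`ε > 0` it admits a factorization `Y_{ij} = ⟨u'_i, v'_j⟩` with
`(max_i ‖u'_i‖)(max_j ‖v'_j‖) ≤ 1/(1 − c) + ε`. -/
theorem statement17 {I J : Type} [Fintype I] [Fintype J]
    (X : I → J → ℂ) (c : ℝ) (hc : c < 1) (k : ℕ)
    (u : I → EuclideanSpace ℂ (Fin k)) (v : J → EuclideanSpace ℂ (Fin k))
    (hX : ∀ i j, X i j = (inner ℂ (u i) (v j) : ℂ))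
    (hnorm : (⨆ i, ‖u i‖) * (⨆ j, ‖v j‖) ≤ c) :
    (∀ i j, ‖X i j‖ < 1) ∧
      ∀ ε : ℝ, 0 < ε →
        ∃ (k' : ℕ) (u' : I → EuclideanSpace ℂ (Fin k'))
          (v' : J → EuclideanSpace ℂ (Fin k')),
          (∀ i j, 1 / (1 - X i j) = (inner ℂ (u' i) (v' j) : ℂ)) ∧
            (⨆ i, ‖u' i‖) * (⨆ j, ‖v' j‖) ≤ 1 / (1 - c) + ε := by
  have hα : 0 ≤ ⨆ i, ‖u i‖ := Real.iSup_nonneg fun _ => norm_nonneg _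
  have hβ : 0 ≤ ⨆ j, ‖v j‖ := Real.iSup_nonneg fun _ => norm_nonneg _
  have hc0 : 0 ≤ c := (mul_nonneg hα hβ).trans hnorm
  have hXc : HasL2Factorization X c c := by
    refine (HasL2Factorization.of_inner u v hX (fun i => ?_) fun j => ?_).balance
      (sq_nonneg _) (sq_nonneg _) hc0
      (by rw [← mul_pow]; exact pow_le_pow_left₀ (mul_nonneg hα hβ) hnorm 2)
    · gcongr; exact le_ciSup (f := fun i => ‖u i‖) (Set.finite_range _).bddAbove i
    · gcongr; exact le_ciSup (f := fun j => ‖v j‖) (Set.finite_range _).bddAbove j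
  refine ⟨fun i j => (hXc.norm_le hc0 i j).trans_lt hc, fun ε hε => ?_⟩
  exact (hXc.one_div_one_sub hc0 hc hε).exists_fin_iSup_mul_iSup_le
    (add_nonneg (one_div_nonneg.2 (sub_nonneg.2 hc.le)) hε.le)
end

section
/- Purifier for relations: let D be a finite set, Z a finite-dimensional complex inner product space, δ > 0, and for each x ∈ D let ψ_x ∈ Z be a unit vector and Π_x an orthogonal projection on Z with ‖Π_x ψ_x‖² ≥ δ; set R_x = I_Z − 2Π_x. Then there exist a finite-dimensional complex inner product space H and unit vectors σ_x ∈ Z ⊗ H (x ∈ D) such that (Π_x ⊗ id_H) σ_x = σ_x for every x ∈ D, and γ₂((1 − ⟨σ_x, σ_y⟩)_{x,y∈D} | ((1 − ⟨ψ_x, ψ_y⟩) ⊕ (R_x − R_y))_{x,y∈D}) ≤ 2/δ, where (1 − ⟨ψ_x, ψ_y⟩) ⊕ (R_x − R_y) denotes the block-diagonal linear map on ℂ ⊕ Z given by multiplication by the scalar 1 − ⟨ψ_x, ψ_y⟩ on ℂ and by R_x − R_y on Z. -/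
/-!
Write `w_x = ψ_x - Π_x ψ_x`, so that `‖w_x‖² = 1 - ‖Π_x ψ_x‖² ≤ 1 - δ`. The matrix
`((1 - ⟨w_x, w_y⟩)⁻¹)_{xy} = ∑ₙ (⟨w_x, w_y⟩ⁿ)_{xy}` is a convergent sum of Hadamard powers of a
Gram matrix, hence positive semidefinite by the Schur product theorem, hence itself the Gram
matrix of vectors `a_x`. The purifier is `σ_x = a_x ⊗ Π_x ψ_x`; it has norm one because
`‖a_x‖² = ‖Π_x ψ_x‖⁻²`. Since `Π_x` is an orthogonal projection,
`1 - ⟨w_x, w_y⟩ - ⟨Π_x ψ_x, Π_y ψ_y⟩ = (1 - ⟨ψ_x, ψ_y⟩) + ½ ⟨R_x ψ_x, (R_x - R_y) ψ_y⟩`,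
and multiplying by `⟨a_x, a_y⟩ = (1 - ⟨w_x, w_y⟩)⁻¹` factors `1 - ⟨σ_x, σ_y⟩` through
`(1 - ⟨ψ_x, ψ_y⟩) ⊕ (R_x - R_y)` via the vectors `a_x ⊗ (1, ½ R_x ψ_x)` and `a_y ⊗ (1, ψ_y)`,
whose squared norms are at most `2 ‖a_x‖² ≤ 2 / δ`.
-/

noncomputable section

open scoped ENNReal ComplexOrder

/-- Block-diagonal direct sum `f ⊕ g` on the `ℓ²`-direct sum of two spaces. -/
noncomputable def dsum {E E' F F' : Type*}
    [NormedAddCommGroup E] [InnerProductSpace ℂ E]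
    [NormedAddCommGroup E'] [InnerProductSpace ℂ E']
    [NormedAddCommGroup F] [InnerProductSpace ℂ F]
    [NormedAddCommGroup F'] [InnerProductSpace ℂ F']
    (f : E →ₗ[ℂ] F) (g : E' →ₗ[ℂ] F') :
    WithLp 2 (E × E') →ₗ[ℂ] WithLp 2 (F × F') :=
  (WithLp.linearEquiv 2 ℂ (F × F')).symm.toLinearMap ∘ₗ
    (LinearMap.prodMap f g) ∘ₗ (WithLp.linearEquiv 2 ℂ (E × E')).toLinearMap

open Finset Matrix
open scoped ComplexConjugate InnerProductSpace

namespace Matrix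

variable {D : Type*} [Fintype D]

theorem PosSemidef.pow_entrywise {G : Matrix D D ℂ} (hG : G.PosSemidef) (n : ℕ) :
    (of fun x y => G x y ^ n).PosSemidef := by
  induction n with
  | zero =>
    have hones : gram ℂ (fun _ : D => (1 : ℂ)) = of fun _ _ => 1 := by ext; simp [gram_apply]
    simpa [hones] using posSemidef_gram ℂ (fun _ : D => (1 : ℂ))
  | succ n ih =>
    have hprod : (of fun x y => G x y ^ (n + 1)) = G ⊙ of fun x y => G x y ^ n := by
      ext x y
      simp [pow_succ', hadamard_apply]
    rw [hprod]
    exact hG.hadamard ih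

theorem PosSemidef.inv_one_sub_entrywise {G : Matrix D D ℂ} (hG : G.PosSemidef)
    (hlt : ∀ x y, ‖G x y‖ < 1) : (of fun x y => (1 - G x y)⁻¹).PosSemidef := by
  refine .of_dotProduct_mulVec_nonneg ?_ fun v => ?_
  · ext x y
    simp [← hG.isHermitian.apply y x]
  · have hsum : HasSum (fun n => star v ⬝ᵥ (of fun x y => G x y ^ n) *ᵥ v)
        (star v ⬝ᵥ (of fun x y => (1 - G x y)⁻¹) *ᵥ v) := by
      simp only [dotProduct, mulVec, of_apply]
      exact hasSum_sum fun x _ => (hasSum_sum fun y _ =>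
        (hasSum_geometric_of_norm_lt_one (hlt x y)).mul_right (v y)).mul_left _
    exact hsum.nonneg fun n => (hG.pow_entrywise n).dotProduct_mulVec_nonneg v

open scoped MatrixOrder in
theorem PosSemidef.exists_eq_gram {M : Matrix D D ℂ} (hM : M.PosSemidef) :
    ∃ a : D → EuclideanSpace ℂ (Fin (Fintype.card D)), gram ℂ a = M := by
  classical
  obtain ⟨B, rfl⟩ := CStarAlgebra.nonneg_iff_eq_star_mul_self.mp hM.nonneg
  let e := LinearIsometryEquiv.piLpCongrLeft 2 ℂ ℂ (Fintype.equivFin D)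
  refine ⟨fun x => e (WithLp.toLp 2 fun i => B i x), ?_⟩
  ext x y
  simp [gram_apply, LinearIsometryEquiv.inner_map_map, PiLp.inner_apply, mul_apply, mul_comm]

end Matrix

section TensorVec

variable {ι : Type*} [Fintype ι] {E : Type*} [NormedAddCommGroup E] [InnerProductSpace ℂ E]

/-- The elementary tensor `a ⊗ v ∈ ℂ^ι ⊗ E`, with `ℂ^ι ⊗ E` realized as `ℓ²(ι, E)`. -/
def tensorVec (a : EuclideanSpace ℂ ι) (v : E) : PiLp 2 (fun _ : ι => E) :=
  WithLp.toLp 2 fun i => a i • v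

theorem inner_tensorVec (a b : EuclideanSpace ℂ ι) (v w : E) :
    ⟪tensorVec a v, tensorVec b w⟫_ℂ = ⟪a, b⟫_ℂ * ⟪v, w⟫_ℂ := by
  simp only [tensorVec, PiLp.inner_apply, inner_smul_left, inner_smul_right, sum_mul]
  refine sum_congr rfl fun i _ => ?_
  simp [mul_comm, mul_left_comm]

theorem norm_tensorVec (a : EuclideanSpace ℂ ι) (v : E) :
    ‖tensorVec a v‖ = ‖a‖ * ‖v‖ := by
  simp only [tensorVec, PiLp.norm_eq_of_L2, norm_smul, mul_pow, ← sum_mul]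
  rw [Real.sqrt_mul (sum_nonneg fun _ _ => sq_nonneg _), Real.sqrt_sq (norm_nonneg v)]

theorem sq_norm_tensorVec_toLp_one_le (a : EuclideanSpace ℂ ι) {z : E} (hz : ‖z‖ ≤ 1) :
    ‖tensorVec a (WithLp.toLp 2 ((1 : ℂ), z))‖ ^ 2 ≤ 2 * ‖a‖ ^ 2 := by
  simp only [norm_tensorVec, mul_pow, WithLp.prod_norm_sq_eq_of_L2, WithLp.toLp_fst,
    WithLp.toLp_snd, norm_one, one_pow]
  nlinarith [pow_le_one₀ (n := 2) (norm_nonneg z) hz, sq_nonneg ‖a‖]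

theorem piBlock_const_tensorVec {F : Type*} [NormedAddCommGroup F]
    [InnerProductSpace ℂ F] (f : E →ₗ[ℂ] F) (a : EuclideanSpace ℂ ι) (v : E) :
    piBlock (fun _ : ι => f) (tensorVec a v) = tensorVec a (f v) := by
  ext i
  simp [piBlock, tensorVec]

end TensorVec

section Factorization

variable {X₁ X₂ : Type*}
  [NormedAddCommGroup X₁] [InnerProductSpace ℂ X₁] [FiniteDimensional ℂ X₁]
  [NormedAddCommGroup X₂] [InnerProductSpace ℂ X₂] [FiniteDimensional ℂ X₂]

theorem opNorm_toSpanSingleton {F : Type*} [NormedAddCommGroup F] [InnerProductSpace ℂ F]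
    (v : F) : opNorm (LinearMap.toSpanSingleton ℂ F v) = ‖v‖ := by
  rw [opNorm, ← ContinuousLinearMap.norm_toSpanSingleton (𝕜 := ℂ) v]
  rfl

theorem relGamma2_scalarMap_le {D₁ D₂ : Type*} [Fintype D₁] [Fintype D₂] {k : ℕ}
    (Δ : D₁ → D₂ → (X₂ →ₗ[ℂ] X₁)) (c : D₁ → D₂ → ℂ)
    (u : D₁ → PiLp 2 (fun _ : Fin k => X₁)) (v : D₂ → PiLp 2 (fun _ : Fin k => X₂))
    (hc : ∀ x y, c x y = ⟪u x, piBlock (fun _ => Δ x y) (v y)⟫_ℂ) {C : ℝ}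
    (hu : ∀ x, ‖u x‖ ^ 2 ≤ C) (hv : ∀ y, ‖v y‖ ^ 2 ≤ C) :
    relGamma2 (fun x y => scalarMap (c x y)) Δ ≤ ENNReal.ofReal C := by
  refine iInf_le_of_le k <| iInf_le_of_le (fun x => LinearMap.toSpanSingleton ℂ _ (u x)) <|
    iInf_le_of_le (fun y => LinearMap.toSpanSingleton ℂ _ (v y)) <| iInf_le_of_le ?_ ?_
  · intro x y
    ext
    simp [scalarMap, hc, LinearMap.adjoint_toSpanSingleton]
  · simp only [opNorm_toSpanSingleton]
    exact sup_le (iSup_le fun x => ENNReal.ofReal_le_ofReal (hu x))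
      (iSup_le fun y => ENNReal.ofReal_le_ofReal (hv y))

end Factorization

namespace LinearMap.IsSymmetricProjection

variable {Z : Type*} [NormedAddCommGroup Z] [InnerProductSpace ℂ Z] {P : Z →ₗ[ℂ] Z}

theorem map_map (hP : P.IsSymmetricProjection) (u : Z) : P (P u) = P u :=
  congr($(hP.isIdempotentElem.eq) u)

theorem inner_map_map (hP : P.IsSymmetricProjection) (u v : Z) :
    ⟪P u, P v⟫_ℂ = ⟪P u, v⟫_ℂ := by
  rw [← hP.isSymmetric, hP.map_map]

theorem inner_map_sub_map (hP : P.IsSymmetricProjection) (u v : Z) :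
    ⟪P u, v - P v⟫_ℂ = 0 := by
  rw [inner_sub_right, hP.inner_map_map, sub_self]

theorem norm_sq_eq_norm_map_sq_add (hP : P.IsSymmetricProjection) (u : Z) :
    ‖u‖ ^ 2 = ‖P u‖ ^ 2 + ‖u - P u‖ ^ 2 := by
  simpa [sq] using
    norm_add_sq_eq_norm_sq_add_norm_sq_of_inner_eq_zero _ _ (hP.inner_map_sub_map u u)

theorem norm_reflection_apply (hP : P.IsSymmetricProjection) {R : Z →ₗ[ℂ] Z}
    (hR : R = LinearMap.id - (2 : ℂ) • P) (u : Z) : ‖R u‖ = ‖u‖ := by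
  have h := norm_sub_eq_norm_add (hP.inner_map_sub_map u u)
  subst hR
  rw [sub_add_cancel, sub_sub, ← two_smul ℂ] at h
  simpa using h

theorem inner_reflection_apply_sub (hP : P.IsSymmetricProjection) {Q R S : Z →ₗ[ℂ] Z}
    (hR : R = LinearMap.id - (2 : ℂ) • P) (hS : S = LinearMap.id - (2 : ℂ) • Q) (u v : Z) :
    ⟪R u, (R - S) v⟫_ℂ = 2 * (⟪u, v⟫_ℂ - ⟪u - P u, v - Q v⟫_ℂ - ⟪P u, Q v⟫_ℂ) := by
  have hsymm : ⟪u, P v⟫_ℂ = ⟪P u, v⟫_ℂ := (hP.isSymmetric u v).symm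
  subst hR hS
  simp only [sub_sub_sub_cancel_left, LinearMap.sub_apply, LinearMap.smul_apply,
    LinearMap.id_apply, inner_sub_left, inner_sub_right, inner_smul_left, inner_smul_right,
    hP.inner_map_map, hsymm, map_ofNat]
  ring

end LinearMap.IsSymmetricProjection

section Purifier

variable {Z : Type*} [NormedAddCommGroup Z] [InnerProductSpace ℂ Z]

theorem exists_inner_mul_one_sub_inner_eq_one {D : Type*} [Fintype D] (w : D → Z)
    (hw : ∀ x, ‖w x‖ < 1) :
    ∃ a : D → EuclideanSpace ℂ (Fin (Fintype.card D)),
      ∀ x y, ⟪a x, a y⟫_ℂ * (1 - ⟪w x, w y⟫_ℂ) = 1 := by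
  have hlt : ∀ x y, ‖gram ℂ w x y‖ < 1 := fun x y => (norm_inner_le_norm _ _).trans_lt
    (mul_lt_one_of_nonneg_of_lt_one_left (norm_nonneg _) (hw x) (hw y).le)
  obtain ⟨a, ha⟩ := ((posSemidef_gram ℂ w).inv_one_sub_entrywise hlt).exists_eq_gram
  refine ⟨a, fun x y => ?_⟩
  have hne : 1 - ⟪w x, w y⟫_ℂ ≠ 0 :=
    sub_ne_zero.2 fun h => (hlt x y).ne (by simp [gram_apply, ← h])
  rw [← gram_apply (𝕜 := ℂ) a, ha, of_apply, gram_apply, inv_mul_cancel₀ hne]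

theorem inner_toLp_dsum_scalarMap {E : Type*} [NormedAddCommGroup E]
    [InnerProductSpace ℂ E] (s c d : ℂ) (T : E →ₗ[ℂ] Z) (u : Z) (v : E) :
    ⟪WithLp.toLp 2 (c, u), dsum (scalarMap s) T (WithLp.toLp 2 (d, v))⟫_ℂ =
      conj c * (s * d) + ⟪u, T v⟫_ℂ := by
  simp [dsum, scalarMap, WithLp.prod_inner_apply, mul_comm]

theorem one_sub_inner_tensorVec_eq {ι : Type*} [Fintype ι] {P Q R S : Z →ₗ[ℂ] Z}
    (hP : P.IsSymmetricProjection) (hR : R = LinearMap.id - (2 : ℂ) • P)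
    (hS : S = LinearMap.id - (2 : ℂ) • Q) {u v : Z} {a b : EuclideanSpace ℂ ι}
    (hab : ⟪a, b⟫_ℂ * (1 - ⟪u - P u, v - Q v⟫_ℂ) = 1) :
    1 - ⟪tensorVec a (P u), tensorVec b (Q v)⟫_ℂ =
      ⟪tensorVec a (WithLp.toLp 2 ((1 : ℂ), (2 : ℂ)⁻¹ • R u)),
        piBlock (fun _ : ι => dsum (scalarMap (1 - ⟪u, v⟫_ℂ)) (R - S))
          (tensorVec b (WithLp.toLp 2 ((1 : ℂ), v)))⟫_ℂ := by
  rw [piBlock_const_tensorVec, inner_tensorVec, inner_tensorVec, inner_toLp_dsum_scalarMap,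
    inner_smul_left, hP.inner_reflection_apply_sub hR hS]
  simp only [map_one, map_inv₀, map_ofNat]
  linear_combination -hab

theorem exists_purifier_coeffs {D : Type*} [Fintype D] (ψ : D → Z) (hψ : ∀ x, ‖ψ x‖ = 1)
    {P : D → Z →ₗ[ℂ] Z} (hP : ∀ x, (P x).IsSymmetricProjection)
    (hpos : ∀ x, 0 < ‖P x (ψ x)‖) :
    ∃ a : D → EuclideanSpace ℂ (Fin (Fintype.card D)),
      (∀ x y, ⟪a x, a y⟫_ℂ * (1 - ⟪ψ x - P x (ψ x), ψ y - P y (ψ y)⟫_ℂ) = 1) ∧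
        ∀ x, ‖a x‖ ^ 2 * ‖P x (ψ x)‖ ^ 2 = 1 := by
  have hpythag : ∀ x, ‖ψ x - P x (ψ x)‖ ^ 2 = 1 - ‖P x (ψ x)‖ ^ 2 := fun x => by
    have h := (hP x).norm_sq_eq_norm_map_sq_add (ψ x)
    rw [hψ, one_pow] at h
    linarith
  obtain ⟨a, ha⟩ := exists_inner_mul_one_sub_inner_eq_one (fun x => ψ x - P x (ψ x))
    fun x => (sq_lt_one_iff₀ (norm_nonneg _)).1 (by nlinarith [hpythag x, hpos x])
  refine ⟨a, ha, fun x => ?_⟩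
  have h := ha x x
  rw [inner_self_eq_norm_sq_to_K, inner_self_eq_norm_sq_to_K, ← RCLike.ofReal_pow,
    ← RCLike.ofReal_pow, hpythag] at h
  exact_mod_cast (by simpa using h : ((‖a x‖ ^ 2 * ‖P x (ψ x)‖ ^ 2 : ℝ) : ℂ) = 1)

end Purifier

/-- Purifier for relations: if `ψ_x` are unit vectors and `Π_x`
orthogonal projections with `‖Π_x ψ_x‖² ≥ δ > 0`, and `R_x = I − 2Π_x`, then there are
a space `H = ℂᵐ` and unit vectors `σ_x ∈ Z ⊗ H` (realized as the `ℓ²`-sum of `m` copies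
of `Z`) with `(Π_x ⊗ id) σ_x = σ_x` and
`γ₂(1 − ⟨σ_x, σ_y⟩ | (1 − ⟨ψ_x, ψ_y⟩) ⊕ (R_x − R_y)) ≤ 2/δ`,
the latter family consisting of block-diagonal maps on `ℂ ⊕ Z`. -/
theorem statement18 {D : Type} [Fintype D] {Z : Type}
    [NormedAddCommGroup Z] [InnerProductSpace ℂ Z] [FiniteDimensional ℂ Z]
    (δ : ℝ) (hδ : 0 < δ)
    (ψ : D → Z) (hψ : ∀ x, ‖ψ x‖ = 1)
    (P : D → (Z →ₗ[ℂ] Z))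
    (hP : ∀ x, LinearMap.adjoint (P x) = P x ∧ P x ∘ₗ P x = P x)
    (hover : ∀ x, δ ≤ ‖P x (ψ x)‖ ^ 2)
    (R : D → (Z →ₗ[ℂ] Z)) (hR : ∀ x, R x = LinearMap.id - (2 : ℂ) • P x) :
    ∃ (m : ℕ) (σ : D → PiLp 2 (fun _ : Fin m => Z)),
      (∀ x, ‖σ x‖ = 1) ∧
      (∀ x, piBlock (fun _ : Fin m => P x) (σ x) = σ x) ∧
      relGamma2 (fun x y => scalarMap (1 - (inner ℂ (σ x) (σ y) : ℂ)))
          (fun x y => dsum (scalarMap (1 - (inner ℂ (ψ x) (ψ y) : ℂ))) (R x - R y)) ≤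
        ENNReal.ofReal (2 / δ) := by
  have hproj : ∀ x, (P x).IsSymmetricProjection := fun x =>
    ⟨(hP x).2, (LinearMap.isSymmetric_iff_isSelfAdjoint _).2 (hP x).1⟩
  obtain ⟨a, ha, ha_norm⟩ := exists_purifier_coeffs ψ hψ hproj fun x => by
    nlinarith [hover x, norm_nonneg (P x (ψ x))]
  have ha_le : ∀ x, 2 * ‖a x‖ ^ 2 ≤ 2 / δ := fun x => by
    rw [le_div_iff₀ hδ]
    nlinarith [ha_norm x, hover x, sq_nonneg ‖a x‖]
  refine ⟨_, fun x => tensorVec (a x) (P x (ψ x)), fun x => ?_, fun x => ?_, ?_⟩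
  · rw [norm_tensorVec, ← pow_left_inj₀ (by positivity) zero_le_one two_ne_zero, mul_pow,
      ha_norm, one_pow]
  · rw [piBlock_const_tensorVec, (hproj x).map_map]
  · refine relGamma2_scalarMap_le _ _
      (fun x => tensorVec (a x) (WithLp.toLp 2 ((1 : ℂ), (2 : ℂ)⁻¹ • R x (ψ x))))
      (fun y => tensorVec (a y) (WithLp.toLp 2 ((1 : ℂ), ψ y))) (fun x y => ?_) (fun x => ?_)
      (fun y => ?_)
    · exact one_sub_inner_tensorVec_eq (hproj x) (hR x) (hR y) (ha x y)
    · refine (sq_norm_tensorVec_toLp_one_le _ ?_).trans (ha_le x)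
      rw [norm_smul, (hproj x).norm_reflection_apply (hR x), hψ]
      norm_num
    · exact (sq_norm_tensorVec_toLp_one_le _ (hψ y).le).trans (ha_le y)
end
end
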